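/- arXiv:2506.00244 — 2 statements merged into one kernel-verified Lean document; each statement's English description precedes it below -/
import Mathlib

section
/- Let E = ℝ^p be a Euclidean space, θ̂ ∈ E, A : E → E a continuous linear map, D_n and D_c finite sets, and μ ≥ 0. For each z ∈ D_n, let y_z ∈ {0,1} and let φ_z : E → ℝ be differentiable at θ̂ with 0 < φ_z(θ̂) < 1; set L_z := (θ ↦ −log(φ_z(θ))) and L_z^δ := (θ ↦ −log(1 − φ_z(θ))) if y_z = 1, and L_z := (θ ↦ −log(1 − φ_z(θ))) and L_z^δ := (θ ↦ −log(φ_z(θ))) if y_z = 0. For each v ∈ D_c let g_v ∈ E, and define I_up(z, v) := ⟪g_v, A(∇L_z(θ̂))⟫ and I_rel(z, v) := ⟪g_v, A(∇L_z(θ̂) − ∇L_z^δ(θ̂))⟫. If Σ_{v ∈ D_c} (−I_up(z, v)) ≥ μ for every z ∈ D_n, then Σ_{z ∈ D_n} Σ_{v ∈ D_c} (I_up(z, v) − I_rel(z, v)) ≥ μ · Σ_{z ∈ D_n} min( φ_z(θ̂)/(1 − φ_z(θ̂)), (1 − φ_z(θ̂))/φ_z(θ̂) ) ≥ 0. (This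 is the exact inequality content of Theorem 2: relabelling the flagged binary nodes can lead to a lower approximate risk on the clean set than removing them.) -/
/-!
Both binary cross-entropy losses have gradient proportional to `∇φ_z(θ̂)`: with `t = φ_z(θ̂)`,
`∇(-log φ_z) = -t⁻¹ ∇φ_z` and `∇(-log (1 - φ_z)) = (1 - t)⁻¹ ∇φ_z`. Hence relabelling turns the
loss gradient into `-r` times itself, with `r` the odds `t / (1 - t)` or `(1 - t) / t`, so that
`I_up(z, v) - I_rel(z, v) = r · (-I_up(z, v))`. Summing over `v` and using the flagging
threshold gives at least `μ · r ≥ μ · min(t / (1 - t), (1 - t) / t)` per flagged node.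
-/

open Real InnerProductSpace
open scoped RealInnerProductSpace Gradient

section Gradient

variable {F : Type*} [NormedAddCommGroup F] [InnerProductSpace ℝ F] [CompleteSpace F]
  {f : F → ℝ} {f' x : F}

theorem HasGradientAt.const_sub (hf : HasGradientAt f f' x) (c : ℝ) :
    HasGradientAt (fun y => c - f y) (-f') x := by
  rw [hasGradientAt_iff_hasFDerivAt, map_neg]
  exact hf.hasFDerivAt.const_sub c

theorem HasGradientAt.neg_log (hf : HasGradientAt f f' x) (hx : f x ≠ 0) :
    HasGradientAt (fun y => -log (f y)) (-(f x)⁻¹ • f') x := by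
  rw [hasGradientAt_iff_hasFDerivAt, map_smulₛₗ, conj_trivial, neg_smul]
  exact (hf.hasFDerivAt.log hx).fun_neg

theorem gradient_neg_log_one_sub_eq_smul (hf : DifferentiableAt ℝ f x) (h0 : f x ≠ 0)
    (h1 : f x ≠ 1) :
    ∇ (fun y => -log (1 - f y)) x = -(f x / (1 - f x)) • ∇ (fun y => -log (f y)) x := by
  have hg := hf.hasGradientAt
  rw [((hg.const_sub 1).neg_log (sub_ne_zero.2 h1.symm)).gradient, (hg.neg_log h0).gradient,
    smul_neg, ← neg_smul, smul_smul]
  congr 1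
  field_simp

theorem gradient_neg_log_eq_smul (hf : DifferentiableAt ℝ f x) (h0 : f x ≠ 0) (h1 : f x ≠ 1) :
    ∇ (fun y => -log (f y)) x = -((1 - f x) / f x) • ∇ (fun y => -log (1 - f y)) x := by
  have h := gradient_neg_log_one_sub_eq_smul (f := fun y => 1 - f y)
    ((differentiableAt_const 1).sub hf) (sub_ne_zero.2 h1.symm) (by simpa using h0)
  simpa only [sub_sub_cancel] using h

/-- `bceLoss f b` is the cross-entropy loss of the label `b` under the predicted probability
`f` of label `true`. -/
noncomputable def bceLoss (f : F → ℝ) (b : Bool) : F → ℝ :=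
  if b then fun y => -log (f y) else fun y => -log (1 - f y)

theorem exists_gradient_bceLoss_not_eq_neg_smul (hf : DifferentiableAt ℝ f x) (h0 : 0 < f x)
    (h1 : f x < 1) (b : Bool) :
    ∃ r, min (f x / (1 - f x)) ((1 - f x) / f x) ≤ r ∧
      ∇ (bceLoss f (!b)) x = -r • ∇ (bceLoss f b) x := by
  cases b
  · exact ⟨_, min_le_right _ _, gradient_neg_log_eq_smul hf h0.ne' h1.ne⟩
  · exact ⟨_, min_le_left _ _, gradient_neg_log_one_sub_eq_smul hf h0.ne' h1.ne⟩

end Gradient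

theorem min_div_one_sub_div_nonneg {t : ℝ} (h0 : 0 ≤ t) (h1 : t ≤ 1) :
    0 ≤ min (t / (1 - t)) ((1 - t) / t) :=
  le_min (div_nonneg h0 (sub_nonneg.2 h1)) (div_nonneg (sub_nonneg.2 h1) h0)

theorem sum_inner_sub_inner_sub_neg_smul {β E E' : Type*} [NormedAddCommGroup E]
    [InnerProductSpace ℝ E] [NormedAddCommGroup E'] [InnerProductSpace ℝ E']
    (s : Finset β) (g : β → E') (A : E →L[ℝ] E') (u : E) (r : ℝ) :
    ∑ v ∈ s, (⟪g v, A u⟫ - ⟪g v, A (u - -r • u)⟫) = r * ∑ v ∈ s, -⟪g v, A u⟫ := by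
  rw [Finset.mul_sum]
  refine Finset.sum_congr rfl fun v _ => ?_
  rw [neg_smul, sub_neg_eq_add, map_add, map_smul, inner_add_right, real_inner_smul_right]
  ring

/-- Theorem 2 (binary case): relabelling the flagged binary nodes can lead to a
lower approximate risk on the clean set than removing them.  With
`I_up(z, v) = ⟪g_v, A ∇L_z(θ̂)⟫` and `I_rel(z, v) = ⟪g_v, A(∇L_z(θ̂) − ∇L_z^δ(θ̂))⟫`,
if `∑_{v ∈ D_c} (−I_up(z, v)) ≥ μ` for every flagged `z`, then
`∑_z ∑_v (I_up z v − I_rel z v) ≥ μ · ∑_z min(φ_z/(1−φ_z), (1−φ_z)/φ_z) ≥ 0`. -/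
theorem deglif_relabel_binary {p : ℕ} {α β : Type*}
    (Dn : Finset α) (Dc : Finset β)
    (θhat : EuclideanSpace ℝ (Fin p))
    (A : EuclideanSpace ℝ (Fin p) →L[ℝ] EuclideanSpace ℝ (Fin p))
    (μ : ℝ) (hμ : 0 ≤ μ)
    (y : α → Bool) (φ : α → EuclideanSpace ℝ (Fin p) → ℝ)
    (hdiff : ∀ z ∈ Dn, DifferentiableAt ℝ (φ z) θhat)
    (h0 : ∀ z ∈ Dn, 0 < φ z θhat) (h1 : ∀ z ∈ Dn, φ z θhat < 1)
    (g : β → EuclideanSpace ℝ (Fin p))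
    (L Lδ : α → EuclideanSpace ℝ (Fin p) → ℝ)
    (hL : ∀ z ∈ Dn, L z = if y z then (fun θ => -Real.log (φ z θ))
                          else (fun θ => -Real.log (1 - φ z θ)))
    (hLδ : ∀ z ∈ Dn, Lδ z = if y z then (fun θ => -Real.log (1 - φ z θ))
                            else (fun θ => -Real.log (φ z θ)))
    (Iup Irel : α → β → ℝ)
    (hIup : ∀ z v, Iup z v = ⟪g v, A (gradient (L z) θhat)⟫)
    (hIrel : ∀ z v, Irel z v = ⟪g v, A (gradient (L z) θhat - gradient (Lδ z) θhat)⟫)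
    (hflag : ∀ z ∈ Dn, μ ≤ ∑ v ∈ Dc, -(Iup z v)) :
    μ * (∑ z ∈ Dn, min (φ z θhat / (1 - φ z θhat)) ((1 - φ z θhat) / φ z θhat))
        ≤ ∑ z ∈ Dn, ∑ v ∈ Dc, (Iup z v - Irel z v)
    ∧ 0 ≤ μ * (∑ z ∈ Dn, min (φ z θhat / (1 - φ z θhat)) ((1 - φ z θhat) / φ z θhat)) := by
  have hmin : ∀ z ∈ Dn, 0 ≤ min (φ z θhat / (1 - φ z θhat)) ((1 - φ z θhat) / φ z θhat) :=
    fun z hz => min_div_one_sub_div_nonneg (h0 z hz).le (h1 z hz).le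
  refine ⟨?_, mul_nonneg hμ (Finset.sum_nonneg hmin)⟩
  rw [Finset.mul_sum]
  refine Finset.sum_le_sum fun z hz => ?_
  obtain ⟨r, hr, hgrad⟩ :=
    exists_gradient_bceLoss_not_eq_neg_smul (hdiff z hz) (h0 z hz) (h1 z hz) (y z)
  have hLz : L z = bceLoss (φ z) (y z) := hL z hz
  have hLδz : Lδ z = bceLoss (φ z) (!y z) := by rw [hLδ z hz]; cases y z <;> rfl
  have hsum : ∑ v ∈ Dc, (Iup z v - Irel z v) = r * ∑ v ∈ Dc, -(Iup z v) := by
    simp only [hIup, hIrel, hLz, hLδz, hgrad]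
    exact sum_inner_sub_inner_sub_neg_smul Dc g A _ r
  rw [hsum, mul_comm μ]
  exact mul_le_mul hr (hflag z hz) hμ ((hmin z hz).trans hr)
end

section
/- Let ι be a finite type, f : ι → ℝ with f(i) > 0 for all i and Σ_{i ∈ ι} f(i) = 1, let m ∈ ι, and let k* ∈ ι with k* ≠ m and f(k*) ≥ f(k) for every k ≠ m. Then for every k ∈ ι with k ≠ m, log_{f(k)}(1 − f(m)) ≤ log_{f(k*)}(1 − f(m)). That is, the class k* = argmax_{k ≠ m} f(k) maximizes the relabelling weight φ_k = log_{f(k)}(1 − f(m)) among k ≠ m, so relabelling to argmax requires the least downweighting. -/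
open Real

lemma pair_sum_le {ι : Type*} [Fintype ι] [DecidableEq ι] (f : ι → ℝ) (hpos : ∀ i, 0 < f i)
    (hsum : ∑ i, f i = 1) {a b : ι} (hab : a ≠ b) : f a + f b ≤ 1 := by
  have h : ∑ i ∈ ({a, b} : Finset ι), f i ≤ ∑ i, f i := by
    apply Finset.sum_le_sum_of_subset_of_nonneg (Finset.subset_univ _)
    intro i _ _
    exact (hpos i).le
  rw [Finset.sum_pair hab] at h
  linarith

/-- The class `k* = argmax_{k ≠ m} f(k)` maximizes the relabelling weight
`φ_k = log_{f(k)}(1 − f(m))` among `k ≠ m`. -/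
theorem relabel_weight_argmax {ι : Type*} [Fintype ι]
    (f : ι → ℝ) (hpos : ∀ i, 0 < f i) (hsum : ∑ i, f i = 1)
    (m kstar : ι) (hks : kstar ≠ m) (hmax : ∀ k, k ≠ m → f k ≤ f kstar) :
    ∀ k, k ≠ m → Real.logb (f k) (1 - f m) ≤ Real.logb (f kstar) (1 - f m) := by
  intro k hk
  classical
  have hks1 : f kstar + f m ≤ 1 := pair_sum_le f hpos hsum hks
  have hk1 : f k < 1 := by have := hpos m; have := hmax k hk; linarith
  have hkstar1 : f kstar < 1 := by have := hpos m; linarith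
  have hfm1 : f m < 1 := by have := hpos kstar; linarith
  have hL : Real.log (1 - f m) < 0 := by
    apply Real.log_neg <;> [linarith; linarith [hpos m]]
  have ha : Real.log (f k) < 0 := Real.log_neg (hpos k) hk1
  have ha' : Real.log (f kstar) < 0 := Real.log_neg (hpos kstar) hkstar1
  have hle : Real.log (f k) ≤ Real.log (f kstar) :=
    Real.log_le_log (hpos k) (hmax k hk)
  unfold Real.logb
  have e1 : Real.log (1 - f m) / Real.log (f k)
      = (-Real.log (1 - f m)) / (-Real.log (f k)) := by ring
  have e2 : Real.log (1 - f m) / Real.log (f kstar)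
      = (-Real.log (1 - f m)) / (-Real.log (f kstar)) := by ring
  rw [e1, e2]
  gcongr
  · linarith
  · linarith
end
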